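/- arXiv:1510.07027 — 5 statements merged into one kernel-verified Lean document; each statement's English description precedes it below -/
import Mathlib

section
/- For every α > 0 and every 0 < β < α/2, the inverse parametrized double-exponential map ψ_SDE⁻¹(·; α) is analytic on the strip S_β = {z ∈ ℂ : |Im z| < β}. -/
noncomputable section

open Complex Real Set Filter

/-- The open strip of half-width `β` in the complex plane. -/
def stripS (β : ℝ) : Set ℂ := {z : ℂ | |z.im| < β}

/-- The set whose supremum is `M_ψ(β; f)`. -/
def MpsiSet (ψinv f : ℂ → ℂ) (β : ℝ) : Set ℝ :=
  (fun z => ‖f (ψinv z)‖) '' stripS β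

/-- `M_ψ(β; f) = sup_{z ∈ S_β} |f(ψ⁻¹(z))|`. -/
def Mpsi (ψinv f : ℂ → ℂ) (β : ℝ) : ℝ := sSup (MpsiSet ψinv f β)

/-- The set whose supremum is `N_ψ(β, L; f)` (with Hölder exponent `τ`). -/
def NpsiSet (ψinv f : ℂ → ℂ) (β L τ : ℝ) : Set ℝ :=
  {t | ∃ z : ℂ,
    (‖z - (L : ℂ)‖ ≤ β ∧
      t = ‖f (ψinv z) - f 1‖ / ‖1 - ψinv z‖ ^ τ) ∨
    (‖z + (L : ℂ)‖ ≤ β ∧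
      t = ‖f (ψinv z) - f 0‖ / ‖ψinv z‖ ^ τ)}

/-- `N_ψ(β, L; f)`. -/
def Npsi (ψinv f : ℂ → ℂ) (β L τ : ℝ) : ℝ := sSup (NpsiSet ψinv f β L τ)

/-- `C_ψ(β, L) = sup_{|s + L| ≤ β} |ψ⁻¹(s)|`. -/
def Cpsi (ψinv : ℂ → ℂ) (β L : ℝ) : ℝ :=
  sSup ((fun s => ‖ψinv s‖) '' {s : ℂ | ‖s + (L : ℂ)‖ ≤ β})

/-- The weights `γ_k` of the discrete cosine transform. -/
def gamCoef (n k : ℕ) : ℝ := if k = 0 ∨ k = n then 1/2 else 1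

/-- The discrete cosine coefficients `c̃_k`. -/
def ctilde (FL : ℝ → ℂ) (n k : ℕ) : ℂ :=
  ((2 * gamCoef n k / n : ℝ) : ℂ) *
    ∑ j ∈ Finset.range (n + 1),
      ((gamCoef n j : ℝ) : ℂ) * FL (-1 + 2 * (j : ℝ) / n) *
        ((Real.cos ((j : ℝ) * k * π / n) : ℝ) : ℂ)

/-- The cosine-expansion approximation `P_{n,L}` of `F_L` on `[-1,1]`. -/
def PnL (FL : ℝ → ℂ) (n : ℕ) (y : ℝ) : ℂ :=
  ∑ k ∈ Finset.range (n + 1),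
    ctilde FL n k * ((Real.cos ((k : ℝ) * π * (y + 1) / 2) : ℝ) : ℂ)

/-- The approximation `p_{n,L}` on `[0,1]`. -/
def papprox (f : ℂ → ℂ) (ψ : ℝ → ℝ) (ψinv : ℂ → ℂ) (n : ℕ) (L : ℝ) (x : ℝ) : ℂ :=
  let FL : ℝ → ℂ := fun y => f (ψinv ((L * y : ℝ) : ℂ))
  let xL : ℝ := (ψinv ((-L : ℝ) : ℂ)).re
  if x < xL then FL (-1)
  else if x ≤ 1 - xL then PnL FL n (ψ x / L)
  else FL 1

/-- The uniform norm on `[0,1]`. -/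
def supNorm01 (g : ℝ → ℂ) : ℝ := sSup ((fun x => ‖g x‖) '' Icc (0 : ℝ) 1)

/-- The exponential map `ψ_E`. -/
def psiE (x : ℝ) : ℝ := Real.log (x / (1 - x))

/-- The inverse exponential map `ψ_E⁻¹`, extended to the complex plane. -/
def psiEinv (s : ℂ) : ℂ := 1 / (1 + Complex.exp (-s))

/-- The parametrized exponential map `ψ_SE(·; α)`. -/
def psiSE (α x : ℝ) : ℝ :=
  (α / π) * Real.log ((Real.exp (π * x / α) - 1) / (1 - Real.exp (π * (x - 1) / α)))

/-- The inverse parametrized exponential map `ψ_SE⁻¹(·; α)`. -/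
def psiSEinv (α : ℝ) (s : ℂ) : ℂ :=
  ((α / π : ℝ) : ℂ) *
    Complex.log ((1 + Complex.exp ((π : ℂ) * (s + 1 / 2) / (α : ℂ))) /
      (1 + Complex.exp ((π : ℂ) * (s - 1 / 2) / (α : ℂ))))

/-- The double-exponential map `ψ_DE`. -/
def psiDE (x : ℝ) : ℝ := Real.arsinh ((1 / π) * Real.log (x / (1 - x)))

/-- The inverse double-exponential map `ψ_DE⁻¹`, extended to the complex plane. -/
def psiDEinv (s : ℂ) : ℂ := 1 / (1 + Complex.exp (-(π : ℂ) * Complex.sinh s))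

/-- The inverse parametrized double-exponential map `ψ_SDE⁻¹(·; α)`. -/
def psiSDEinv (α : ℝ) (s : ℂ) : ℂ :=
  ((α / π : ℝ) : ℂ) *
    Complex.log (
      (1 + Complex.exp ((π : ℂ) * (s + 1 / 2) / (α : ℂ) +
        Complex.sinh ((π : ℂ) * s / (α : ℂ)) / Complex.cosh ((π : ℂ) / (2 * (α : ℂ))))) /
      (1 + Complex.exp ((π : ℂ) * (s - 1 / 2) / (α : ℂ) +
        Complex.sinh ((π : ℂ) * s / (α : ℂ)) / Complex.cosh ((π : ℂ) / (2 * (α : ℂ))))))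

/-- The parametrized double-exponential map `ψ_SDE(·; α)`, the inverse of `ψ_SDE⁻¹` on ℝ. -/
def psiSDE (α : ℝ) : ℝ → ℝ := Function.invFun (fun s : ℝ => (psiSDEinv α ((s : ℝ) : ℂ)).re)

/-- The principal branch of the Lambert-W function (for nonnegative arguments). -/
def lambertW (x : ℝ) : ℝ := sSup {w : ℝ | w * Real.exp w ≤ x}

/-- The oscillatory test function `f(x) = exp(-2πiωx)`. -/
def fosc (ω : ℝ) : ℂ → ℂ := fun z => Complex.exp (-2 * (π : ℂ) * Complex.I * (ω : ℂ) * z)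

/-- The two-slit strip `Ŝ_α = S_α \ ((-∞,0] ∪ [1,∞))`. -/
def twoSlitStrip (α : ℝ) : Set ℂ :=
  stripS α \ ({z : ℂ | z.im = 0 ∧ z.re ≤ 0} ∪ {z : ℂ | z.im = 0 ∧ 1 ≤ z.re})

/-- The function `H` governing the interior error for `ψ_E`. -/
def Hfun (t : ℝ) : ℝ :=
  if 1 < t then t * Real.arccos (1 / Real.sqrt t) - Real.sqrt (t - 1) else 0

/-- The parameter `α = L₀π/(π/2 + W(cn))` for the map `ψ_SDE`. -/
def alphaSDE (L₀ c : ℝ) (n : ℕ) : ℝ := L₀ * π / (π / 2 + lambertW (c * n))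

/-! Write `ψ_SDE⁻¹ = ψ_SE⁻¹ ∘ g⁻¹`. With `d = π / (2α)` and `v = π g⁻¹(s) / α` one has
`ψ_SE⁻¹(g⁻¹(s)) = (α/π) log ((1 + e^{v + d}) / (1 + e^{v - d}))`, and the quotient is a nonpositive
real (or the denominator vanishes) only if `e^v` is a negative real with `|Re v| ≤ d`.
For `|Im s| < α/2` this is impossible: with `z = π s / α = x + iy`, `|y| < π/2`, we have
`v = z + sinh z / cosh d`, and `Im v ∈ π + 2πℤ` forces `cosh x > cosh d`, whence
`|Re v| ≥ |x| > d`. -/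

namespace Complex

theorem sinh_re (z : ℂ) : (sinh z).re = Real.sinh z.re * Real.cos z.im := by
  conv_lhs => rw [← re_add_im z]
  rw [sinh_add, sinh_mul_I, cosh_mul_I, ← ofReal_sinh, ← ofReal_cosh, ← ofReal_cos,
    ← ofReal_sin]
  simp only [add_re, mul_re, mul_im, ofReal_re, ofReal_im, I_re, I_im]
  ring

theorem sinh_im (z : ℂ) : (sinh z).im = Real.cosh z.re * Real.sin z.im := by
  conv_lhs => rw [← re_add_im z]
  rw [sinh_add, sinh_mul_I, cosh_mul_I, ← ofReal_sinh, ← ofReal_cosh, ← ofReal_cos,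
    ← ofReal_sin]
  simp only [add_im, mul_re, mul_im, ofReal_re, ofReal_im, I_re, I_im]
  ring

end Complex

open Complex

theorem Real.pi_le_abs_of_cos_eq_neg_one {θ : ℝ} (h : Real.cos θ = -1) : π ≤ |θ| := by
  by_contra! hlt
  obtain ⟨hθ₁, hθ₂⟩ := abs_lt.mp hlt
  have hsin : Real.sin θ = 0 := by nlinarith [Real.sin_sq_add_cos_sq θ]
  rw [(Real.sin_eq_zero_iff_of_lt_of_lt hθ₁ hθ₂).mp hsin, Real.cos_zero] at h
  norm_num at h

theorem cos_im_eq_neg_one_of_one_add_exp_eq {v : ℂ} {d t : ℝ} (ht : t ≤ 0)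
    (h : 1 + exp (v + d) = t * (1 + exp (v - d))) :
    Real.cos v.im = -1 ∧ |v.re| ≤ |d| := by
  set a := Real.exp (v.re + d)
  set b := Real.exp (v.re - d)
  have ha : 0 < a := Real.exp_pos _
  have hb : 0 < b := Real.exp_pos _
  have hre : 1 + a * Real.cos v.im = t * (1 + b * Real.cos v.im) := by
    simpa [exp_re] using congrArg re h
  have him : a * Real.sin v.im = t * (b * Real.sin v.im) := by
    simpa [exp_im] using congrArg im h
  have hsin : Real.sin v.im = 0 := by
    have : (a - t * b) * Real.sin v.im = 0 := by linear_combination him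
    exact (mul_eq_zero.mp this).resolve_left (by nlinarith)
  have hcos : Real.cos v.im = -1 := by
    have hsq : Real.cos v.im * Real.cos v.im = 1 := by nlinarith [Real.sin_sq_add_cos_sq v.im]
    refine (mul_self_eq_one_iff.mp hsq).resolve_left fun h1 => ?_
    rw [h1] at hre
    nlinarith
  have hsign : (1 - a) * (1 - b) ≤ 0 := by
    rw [hcos] at hre
    nlinarith [sq_nonneg (1 - b)]
  refine ⟨hcos, abs_le.mpr ⟨?_, ?_⟩⟩
  · by_contra! hlt
    have ha1 : a < 1 := Real.exp_lt_one_iff.mpr (by linarith [le_abs_self d])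
    have hb1 : b < 1 := Real.exp_lt_one_iff.mpr (by linarith [neg_abs_le d])
    nlinarith
  · by_contra! hlt
    have ha1 : 1 < a := Real.one_lt_exp_iff.mpr (by linarith [neg_abs_le d])
    have hb1 : 1 < b := Real.one_lt_exp_iff.mpr (by linarith [le_abs_self d])
    nlinarith

theorem one_add_exp_sub_ne_zero {v : ℂ} {d : ℝ} (hd : 0 ≤ d)
    (hv : Real.cos v.im = -1 → d < |v.re|) : 1 + exp (v - d) ≠ 0 := by
  intro h
  obtain ⟨hcos, hre⟩ := cos_im_eq_neg_one_of_one_add_exp_eq (v := v) (d := -d) le_rfl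
    (by simpa [sub_eq_add_neg] using h)
  rw [abs_neg, abs_of_nonneg hd] at hre
  exact hre.not_gt (hv hcos)

theorem one_add_exp_div_mem_slitPlane {v : ℂ} {d : ℝ} (hd : 0 ≤ d)
    (hv : Real.cos v.im = -1 → d < |v.re|) :
    (1 + exp (v + d)) / (1 + exp (v - d)) ∈ slitPlane := by
  set q := (1 + exp (v + d)) / (1 + exp (v - d)) with hq_def
  rw [mem_slitPlane_iff]
  by_contra! hq
  have hq_real : q = q.re := ext rfl (by simpa using hq.2)
  obtain ⟨hcos, hre⟩ := cos_im_eq_neg_one_of_one_add_exp_eq (v := v) (d := d) hq.1 <| by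
    rw [← hq_real, hq_def, div_mul_cancel₀ _ (one_add_exp_sub_ne_zero hd hv)]
  rw [abs_of_nonneg hd] at hre
  exact hre.not_gt (hv hcos)

/-- As `|y| < π / 2`, the hypothesis forces `cosh x > cosh d`, i.e. `|x| > d`; and `sinh x cos y`
has the sign of `x`. -/
theorem Real.lt_abs_add_sinh_mul_cos_div_cosh {d x y : ℝ} (hd : 0 < d) (hy : |y| < π / 2)
    (h : π ≤ |y + Real.cosh x * Real.sin y / Real.cosh d|) :
    d < |x + Real.sinh x * Real.cos y / Real.cosh d| := by
  have hcd := Real.cosh_pos d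
  have hcx := Real.cosh_pos x
  have hbound : |Real.cosh x * Real.sin y / Real.cosh d| ≤ Real.cosh x / Real.cosh d := by
    rw [abs_div, abs_mul, abs_of_pos hcx, abs_of_pos hcd]
    gcongr
    exact mul_le_of_le_one_right hcx.le (Real.abs_sin_le_one y)
  have hratio : 1 < Real.cosh x / Real.cosh d := by
    linarith [abs_add_le y (Real.cosh x * Real.sin y / Real.cosh d), Real.pi_gt_three]
  have hx : d < |x| := by
    rwa [one_lt_div hcd, Real.cosh_lt_cosh, abs_of_pos hd] at hratio
  have hcos : 0 ≤ Real.cos y := Real.cos_nonneg_of_mem_Icc (abs_le.mp hy.le)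
  have hsame : |x + Real.sinh x * Real.cos y / Real.cosh d|
      = |x| + |Real.sinh x * Real.cos y / Real.cosh d| := by
    rw [abs_add_eq_add_abs_iff]
    rcases le_total 0 x with hx0 | hx0
    · exact .inl ⟨hx0, by have := Real.sinh_nonneg_iff.mpr hx0; positivity⟩
    · exact .inr ⟨hx0, div_nonpos_of_nonpos_of_nonneg
        (mul_nonpos_of_nonpos_of_nonneg (Real.sinh_nonpos_iff.mpr hx0) hcos) hcd.le⟩
  linarith [abs_nonneg (Real.sinh x * Real.cos y / Real.cosh d)]

theorem lt_abs_re_add_sinh_div_cosh {d : ℝ} (hd : 0 < d) {z : ℂ} (hz : |z.im| < π / 2)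
    (h : Real.cos (z + sinh z / cosh (d : ℂ)).im = -1) :
    d < |(z + sinh z / cosh (d : ℂ)).re| := by
  have hre : (z + sinh z / cosh (d : ℂ)).re
      = z.re + Real.sinh z.re * Real.cos z.im / Real.cosh d := by
    rw [← ofReal_cosh, add_re, div_ofReal_re, sinh_re]
  have him : (z + sinh z / cosh (d : ℂ)).im
      = z.im + Real.cosh z.re * Real.sin z.im / Real.cosh d := by
    rw [← ofReal_cosh, add_im, div_ofReal_im, sinh_im]
  rw [hre]
  rw [him] at h
  exact Real.lt_abs_add_sinh_mul_cos_div_cosh hd hz (Real.pi_le_abs_of_cos_eq_neg_one h)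

theorem analyticAt_psiSEinv {α : ℝ} (hα : 0 < α) {w : ℂ}
    (hw : Real.cos (π * w / α).im = -1 → π / (2 * α) < |(π * w / α).re|) :
    AnalyticAt ℂ (psiSEinv α) w := by
  have hα' : (α : ℂ) ≠ 0 := ofReal_ne_zero.mpr hα.ne'
  have hd : 0 ≤ π / (2 * α) := by positivity
  have hplus : π * (w + 1 / 2) / α = π * w / α + ((π / (2 * α) : ℝ) : ℂ) := by
    push_cast; field_simp
  have hminus : π * (w - 1 / 2) / α = π * w / α - ((π / (2 * α) : ℝ) : ℂ) := by
    push_cast; field_simp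
  have hnum : AnalyticAt ℂ (fun s : ℂ => 1 + exp (π * (s + 1 / 2) / α)) w := by fun_prop
  have hden : AnalyticAt ℂ (fun s : ℂ => 1 + exp (π * (s - 1 / 2) / α)) w := by fun_prop
  unfold psiSEinv
  refine analyticAt_const.mul (AnalyticAt.clog (hnum.div hden ?_) ?_)
  · rw [hminus]
    exact one_add_exp_sub_ne_zero hd hw
  · rw [hplus, hminus]
    exact one_add_exp_div_mem_slitPlane hd hw

/-- The map `g⁻¹(·; α)` of the paper. -/
def gInv (α : ℝ) (s : ℂ) : ℂ := s + α / π * sinh (π * s / α) / Complex.cosh (π / (2 * α))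

theorem pi_mul_gInv_div {α : ℝ} (hα : α ≠ 0) (s : ℂ) :
    π * gInv α s / α = π * s / α + sinh (π * s / α) / cosh ((π / (2 * α) : ℝ) : ℂ) := by
  have hα' : (α : ℂ) ≠ 0 := ofReal_ne_zero.mpr hα
  have hπ : (π : ℂ) ≠ 0 := ofReal_ne_zero.mpr Real.pi_ne_zero
  unfold gInv
  push_cast
  field_simp

theorem psiSDEinv_eq_psiSEinv_comp_gInv {α : ℝ} (hα : α ≠ 0) :
    psiSDEinv α = psiSEinv α ∘ gInv α := by
  have hα' : (α : ℂ) ≠ 0 := ofReal_ne_zero.mpr hα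
  have hπ : (π : ℂ) ≠ 0 := ofReal_ne_zero.mpr Real.pi_ne_zero
  funext s
  simp only [Function.comp, psiSDEinv, psiSEinv, gInv]
  congr 5 <;> field_simp <;> ring

theorem psiSDEinv_analyticOnNhd_stripS_half {α : ℝ} (hα : 0 < α) :
    AnalyticOnNhd ℂ (psiSDEinv α) (stripS (α / 2)) := by
  intro s hs
  have hz : |(π * s / α : ℂ).im| < π / 2 := by
    rw [div_ofReal_im, im_ofReal_mul, abs_div, abs_mul, abs_of_pos Real.pi_pos, abs_of_pos hα,
      div_lt_iff₀ hα]
    have hs' : |s.im| < α / 2 := hs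
    nlinarith [Real.pi_pos]
  rw [psiSDEinv_eq_psiSEinv_comp_gInv hα.ne']
  refine (analyticAt_psiSEinv hα ?_).comp (by unfold gInv; fun_prop)
  rw [pi_mul_gInv_div hα.ne']
  exact lt_abs_re_add_sinh_div_cosh (by positivity) hz

theorem psiSDEinv_analyticOn_general
    (α β : ℝ) (hα : 0 < α) (hβ : β < α / 2) :
    AnalyticOnNhd ℂ (psiSDEinv α) (stripS β) :=
  (psiSDEinv_analyticOnNhd_stripS_half hα).mono fun _ hz => lt_trans hz hβ

/-- analyticity of `ψ_SDE⁻¹` on strips (Lemma B.1). -/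
theorem psiSDEinv_analyticOn
    (α β : ℝ) (hα : 0 < α) (hβ0 : 0 < β) (hβ : β < α / 2) :
    AnalyticOnNhd ℂ (psiSDEinv α) (stripS β) :=
  psiSDEinv_analyticOn_general α β hα hβ
end
end

section
/- For 0 < σ < 1/2 define G(y, σ) = sin(σπ + e^y sin(σπ)) / ( exp(y + e^y cos(σπ)) + cos(σπ + e^y sin(σπ)) ). Then for every 0 < σ < 1/2, sup_{y ≥ 0} |G(y, σ)| ≤ tan(σπ). -/
noncomputable section

open Complex Real Set Filter

/-! With `θ = σπ`, `t = e^y` and `u = t sin θ`, the denominator is `t e^{t cos θ} + cos (θ + u)`,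
so the claim reduces to `cos θ |sin (θ + u)| - sin θ cos (θ + u) ≤ u e^{t cos θ}`. The left side
is `sin u ≤ u` when `sin (θ + u) ≥ 0`, and `-sin (2θ + u) ≤ 1 < u` otherwise, since then
`θ + u > π`. -/

namespace Real

lemma cos_mul_abs_sin_add_sub_sin_mul_cos_add_le {θ u : ℝ} (hθ₀ : 0 ≤ θ) (hθ : θ ≤ π / 2)
    (hu : 0 ≤ u) : cos θ * |sin (θ + u)| - sin θ * cos (θ + u) ≤ u := by
  rcases le_or_gt 0 (sin (θ + u)) with hsin | hsin
  · calc cos θ * |sin (θ + u)| - sin θ * cos (θ + u) = sin u := by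
          rw [abs_of_nonneg hsin, ← add_sub_cancel_left θ u, sin_sub, add_sub_cancel_left]
          ring
      _ ≤ u := sin_le hu
  · have hπ : π < θ + u := by
      by_contra! h
      exact hsin.not_ge (sin_nonneg_of_nonneg_of_le_pi (by linarith) h)
    calc cos θ * |sin (θ + u)| - sin θ * cos (θ + u) = -sin (θ + u + θ) := by
          rw [abs_of_neg hsin, sin_add (θ + u) θ]
          ring
      _ ≤ 1 := by linarith [neg_one_le_sin (θ + u + θ)]
      _ ≤ u := by linarith [pi_gt_three]

lemma abs_div_le_tan_of_cos_mul_abs_le {θ s D : ℝ} (hθ₀ : 0 ≤ θ) (hθ : θ < π / 2)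
    (h : cos θ * |s| ≤ sin θ * D) : |s / D| ≤ tan θ := by
  rw [abs_div]
  rcases (abs_nonneg D).eq_or_lt with hD | hD
  · rw [← hD, div_zero]
    exact tan_nonneg_of_nonneg_of_le_pi_div_two hθ₀ hθ.le
  · have hcos : 0 < cos θ := cos_pos_of_mem_Ioo ⟨by linarith [pi_pos], hθ⟩
    have hsin : 0 ≤ sin θ := sin_nonneg_of_nonneg_of_le_pi hθ₀ (by linarith [pi_pos])
    rw [tan_eq_sin_div_cos, div_le_div_iff₀ hD hcos]
    linarith [mul_le_mul_of_nonneg_left (le_abs_self D) hsin]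

end Real

/-- the technical bound on `G(y, σ)` (Lemma B.3). -/
theorem Gfun_bound
    (σ : ℝ) (hσ0 : 0 < σ) (hσ : σ < 1 / 2) :
    ∀ y : ℝ, 0 ≤ y →
      |Real.sin (σ * π + Real.exp y * Real.sin (σ * π)) /
          (Real.exp (y + Real.exp y * Real.cos (σ * π)) +
            Real.cos (σ * π + Real.exp y * Real.sin (σ * π)))| ≤ Real.tan (σ * π) := by
  intro y _
  have hθ₀ : 0 ≤ σ * π := by positivity
  have hθ : σ * π < π / 2 := by nlinarith [Real.pi_pos]
  have hu : 0 ≤ Real.exp y * Real.sin (σ * π) := mul_nonneg (Real.exp_pos y).le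
    (Real.sin_nonneg_of_nonneg_of_le_pi hθ₀ (by linarith [Real.pi_pos]))
  have hE : 1 ≤ Real.exp (Real.exp y * Real.cos (σ * π)) := Real.one_le_exp
    (mul_nonneg (Real.exp_pos y).le (Real.cos_nonneg_of_mem_Icc ⟨by linarith, hθ.le⟩))
  apply Real.abs_div_le_tan_of_cos_mul_abs_le hθ₀ hθ
  rw [Real.exp_add]
  linarith [Real.cos_mul_abs_sin_add_sub_sin_mul_cos_add_le hθ₀ hθ.le hu,
    mul_le_mul_of_nonneg_left hE hu]
end
end

section
/- For every real A with 0 ≤ A < 1 and every real y with |y| ≤ 1, the principal complex logarithm satisfies |Log(1 + A e^{iπy})| ≤ √2 · |log(1 − A)|. -/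
noncomputable section

open Complex Real Set Filter

/- `Log (1 + z) = ∑ (-1)^(n+1) z^n / n` is dominated termwise by `∑ ‖z‖^n / n = -log (1 - ‖z‖)`. -/
theorem Complex.norm_log_one_add_le_neg_log_one_sub {z : ℂ} (hz : ‖z‖ < 1) :
    ‖Complex.log (1 + z)‖ ≤ -Real.log (1 - ‖z‖) := by
  have hnorm : ‖(‖z‖ : ℂ)‖ < 1 := by rwa [Complex.norm_real, norm_norm]
  have hmajorant : HasSum (fun n : ℕ ↦ ‖z‖ ^ n / n) (-Real.log (1 - ‖z‖)) := by
    rw [← Complex.hasSum_ofReal]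
    push_cast
    rw [Complex.ofReal_log (sub_nonneg.2 hz.le)]
    push_cast
    exact Complex.hasSum_taylorSeries_neg_log hnorm
  exact (Complex.hasSum_taylorSeries_log hz).norm_le_of_bounded hmajorant fun n ↦ by simp

theorem Complex.norm_ofReal_mul_exp_mul_I (A θ : ℝ) (hA : 0 ≤ A) :
    ‖(A : ℂ) * Complex.exp (θ * Complex.I)‖ = A := by
  rw [norm_mul, Complex.norm_exp_ofReal_mul_I, mul_one, Complex.norm_of_nonneg hA]

theorem clog_one_add_bound_general
    (A y : ℝ) (hA0 : 0 ≤ A) (hA1 : A < 1) :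
    ‖Complex.log (1 + (A : ℂ) * Complex.exp ((π : ℂ) * Complex.I * (y : ℂ)))‖ ≤
      Real.sqrt 2 * |Real.log (1 - A)| := by
  have hw : ‖(A : ℂ) * Complex.exp ((π : ℂ) * Complex.I * (y : ℂ))‖ = A := by
    rw [show (π : ℂ) * Complex.I * (y : ℂ) = ((π * y : ℝ) : ℂ) * Complex.I by push_cast; ring]
    exact Complex.norm_ofReal_mul_exp_mul_I A _ hA0
  have hlog : Real.log (1 - A) ≤ 0 := Real.log_nonpos (by linarith) (by linarith)
  calc _ ≤ -Real.log (1 - A) :=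
        (Complex.norm_log_one_add_le_neg_log_one_sub (hw.trans_lt hA1)).trans_eq (by rw [hw])
    _ = |Real.log (1 - A)| := (abs_of_nonpos hlog).symm
    _ ≤ Real.sqrt 2 * |Real.log (1 - A)| :=
      le_mul_of_one_le_left (abs_nonneg _) (Real.one_le_sqrt.2 one_le_two)

/-- bound on the principal logarithm of `1 + A e^{iπy}`. -/
theorem clog_one_add_bound
    (A y : ℝ) (hA0 : 0 ≤ A) (hA1 : A < 1) (hy : |y| ≤ 1) :
    ‖Complex.log (1 + (A : ℂ) * Complex.exp ((π : ℂ) * Complex.I * (y : ℂ)))‖ ≤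
      Real.sqrt 2 * |Real.log (1 - A)| :=
  clog_one_add_bound_general A y hA0 hA1
end
end

section
/- Let ψ_E⁻¹(z) = 1/(1 + e^{−z}) be the inverse exponential map, let 0 < β < π and ω > 0. Then sup_{z ∈ S_β} |exp(−2πiω ψ_E⁻¹(z))| = exp(πω tan(β/2)); in particular, sup_{x ∈ ℝ} sin(β)/(e^x + 2cos(β) + e^{−x}) = tan(β/2)/2. -/
noncomputable section

open Complex Real Set Filter

/-! Writing `z = x + iy`, one has `‖exp(-2πiω ψ_E⁻¹(z))‖ = exp(2πω Im ψ_E⁻¹(z))` and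
`Im ψ_E⁻¹(z) = sin y / (eˣ + 2 cos y + e⁻ˣ)`. Since `eˣ + e⁻ˣ ≥ 2`, this is at most
`sin y / (2 + 2 cos y) = tan(y/2)/2 ≤ tan(β/2)/2`, with equality on the imaginary axis. So the
supremum over the open strip is approached as `y → β⁻` along that axis, while the real supremum
(taken with `y = β`) is attained at `x = 0`. -/

open Topology

lemma norm_cexp_neg_two_pi_I_mul (ω : ℝ) (w : ℂ) :
    ‖Complex.exp (-2 * (π : ℂ) * Complex.I * (ω : ℂ) * w)‖ = Real.exp (2 * π * ω * w.im) := by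
  rw [Complex.norm_exp]
  congr 1
  simp [Complex.mul_re, Complex.mul_im]

lemma normSq_one_add_cexp_neg (z : ℂ) :
    Complex.normSq (1 + Complex.exp (-z)) =
      Real.exp (-z.re) * (Real.exp z.re + 2 * Real.cos z.im + Real.exp (-z.re)) := by
  have hexp : Real.exp (-z.re) * Real.exp z.re = 1 := by rw [← Real.exp_add]; simp
  rw [Complex.normSq_apply]
  simp only [Complex.add_re, Complex.add_im, Complex.one_re, Complex.one_im, Complex.exp_re,
    Complex.exp_im, Complex.neg_re, Complex.neg_im, Real.cos_neg, Real.sin_neg]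
  linear_combination Real.exp (-z.re) ^ 2 * Real.sin_sq_add_cos_sq z.im - hexp

-- The identity holds also where the denominator vanishes: both sides are then `0`.
lemma psiEinv_im (z : ℂ) :
    (psiEinv z).im = Real.sin z.im / (Real.exp z.re + 2 * Real.cos z.im + Real.exp (-z.re)) := by
  rw [psiEinv, one_div, Complex.inv_im, normSq_one_add_cexp_neg]
  simp only [Complex.add_im, Complex.one_im, Complex.exp_im, Complex.neg_re, Complex.neg_im,
    Real.sin_neg, zero_add, mul_neg, neg_neg]
  exact mul_div_mul_left _ _ (Real.exp_pos _).ne'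

lemma sin_div_two_add_two_cos (y : ℝ) :
    Real.sin y / (2 + 2 * Real.cos y) = Real.tan (y / 2) / 2 := by
  have hsin : Real.sin y = 2 * Real.sin (y / 2) * Real.cos (y / 2) := by
    rw [← Real.sin_two_mul]; ring_nf
  have hcos : 2 + 2 * Real.cos y = 4 * Real.cos (y / 2) ^ 2 := by
    rw [Real.cos_sq, show 2 * (y / 2) = y by ring]; ring
  rw [hsin, hcos, Real.tan_eq_sin_div_cos]
  rcases eq_or_ne (Real.cos (y / 2)) 0 with hc | hc
  · simp [hc]
  · field_simp
    ring

lemma sin_div_exp_add_two_cos_add_exp_le (x : ℝ) {y : ℝ} (hy : |y| < π) :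
    Real.sin y / (Real.exp x + 2 * Real.cos y + Real.exp (-x)) ≤ Real.tan (|y| / 2) / 2 := by
  have hcos : -1 < Real.cos y := by
    rw [← Real.cos_abs, ← Real.cos_pi]
    exact Real.cos_lt_cos_of_nonneg_of_le_pi (abs_nonneg y) le_rfl hy
  have hexp : 2 ≤ Real.exp x + Real.exp (-x) := by
    have := Real.one_le_cosh x
    rw [Real.cosh_eq] at this
    linarith
  rcases le_or_gt (Real.sin y) 0 with hsin | hsin
  · have htan : 0 ≤ Real.tan (|y| / 2) :=
      Real.tan_nonneg_of_nonneg_of_le_pi_div_two (by positivity) (by linarith)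
    calc Real.sin y / (Real.exp x + 2 * Real.cos y + Real.exp (-x)) ≤ 0 :=
          div_nonpos_of_nonpos_of_nonneg hsin (by linarith)
      _ ≤ Real.tan (|y| / 2) / 2 := by linarith
  · have hy : 0 < y := by
      by_contra! hy
      exact hsin.not_ge (Real.sin_nonpos_of_nonpos_of_neg_pi_le hy (by linarith [neg_abs_le y]))
    calc Real.sin y / (Real.exp x + 2 * Real.cos y + Real.exp (-x))
        ≤ Real.sin y / (2 + 2 * Real.cos y) :=
          div_le_div_of_nonneg_left hsin.le (by linarith) (by linarith)
      _ = Real.tan (|y| / 2) / 2 := by rw [abs_of_pos hy, sin_div_two_add_two_cos]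

lemma psiEinv_im_le {β : ℝ} (hβπ : β < π) {z : ℂ} (hz : |z.im| ≤ β) :
    (psiEinv z).im ≤ Real.tan (β / 2) / 2 := by
  have hπ := Real.pi_pos
  have htan : Real.tan (|z.im| / 2) ≤ Real.tan (β / 2) :=
    Real.strictMonoOn_tan.monotoneOn ⟨by linarith [abs_nonneg z.im], by linarith⟩
      ⟨by linarith [abs_nonneg z.im], by linarith⟩ (by linarith)
  rw [psiEinv_im]
  linarith [sin_div_exp_add_two_cos_add_exp_le z.re (hz.trans_lt hβπ)]

lemma psiEinv_ofReal_mul_I_im (y : ℝ) : (psiEinv (y * Complex.I)).im = Real.tan (y / 2) / 2 := by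
  rw [psiEinv_im, ← sin_div_two_add_two_cos]
  rw [Complex.re_ofReal_mul, Complex.im_ofReal_mul, Complex.I_re, Complex.I_im, mul_zero,
    mul_one, neg_zero, Real.exp_zero]
  ring

lemma isLUB_psiEinv_im_image_stripS {β : ℝ} (hβ0 : 0 < β) (hβπ : β < π) :
    IsLUB ((fun z => (psiEinv z).im) '' stripS β) (Real.tan (β / 2) / 2) := by
  refine ⟨?_, fun b hb => ?_⟩
  · rintro _ ⟨z, hz, rfl⟩
    exact psiEinv_im_le hβπ (le_of_lt hz)
  · have hcos : Real.cos (β / 2) ≠ 0 :=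
      (Real.cos_pos_of_mem_Ioo ⟨by linarith [Real.pi_pos], by linarith⟩).ne'
    have hcont : ContinuousAt (fun y => Real.tan (y / 2) / 2) β :=
      ((Real.continuousAt_tan.mpr hcos).comp (f := fun y => y / 2) (by fun_prop)).div_const 2
    refine le_of_tendsto (hcont.tendsto.mono_left nhdsWithin_le_nhds)
      (mem_of_superset (Ioo_mem_nhdsLT (neg_lt_self hβ0)) fun y hy => ?_)
    have hmem : (y * Complex.I : ℂ) ∈ stripS β := by simp [stripS, abs_lt, hy.1, hy.2]
    simpa only [mem_ofPred_eq, psiEinv_ofReal_mul_I_im] using hb ⟨_, hmem, rfl⟩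

/-- the supremum of `|exp(−2πiω ψ_E⁻¹(z))|` over the strip `S_β`. -/
theorem psiEinv_strip_sup
    (β ω : ℝ) (hβ0 : 0 < β) (hβπ : β < π) (hω : 0 < ω) :
    sSup ((fun z => ‖Complex.exp (-2 * (π : ℂ) * Complex.I * (ω : ℂ) *
          psiEinv z)‖) '' stripS β) = Real.exp (π * ω * Real.tan (β / 2)) ∧
      sSup (Set.range fun x : ℝ =>
          Real.sin β / (Real.exp x + 2 * Real.cos β + Real.exp (-x))) =
        Real.tan (β / 2) / 2 := by
  have hlub := isLUB_psiEinv_im_image_stripS hβ0 hβπ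
  have hmono : Monotone fun t => Real.exp (2 * π * ω * t) :=
    Real.exp_monotone.comp (monotone_mul_left_of_nonneg (by positivity))
  have hne : ((fun z => (psiEinv z).im) '' stripS β).Nonempty :=
    ⟨_, mem_image_of_mem _ (show (0 : ℂ) ∈ stripS β by simp [stripS, hβ0])⟩
  constructor
  · calc _ = sSup ((fun t => Real.exp (2 * π * ω * t)) ''
              ((fun z => (psiEinv z).im) '' stripS β)) := by
          simp only [image_image, norm_cexp_neg_two_pi_I_mul]
      _ = Real.exp (2 * π * ω * (Real.tan (β / 2) / 2)) := by
          rw [← hmono.map_csSup_of_continuousAt (by fun_prop) hne hlub.bddAbove, hlub.csSup_eq hne]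
      _ = Real.exp (π * ω * Real.tan (β / 2)) := by ring_nf
  · refine IsGreatest.csSup_eq ⟨⟨0, ?_⟩, ?_⟩
    · simpa [psiEinv_im] using psiEinv_ofReal_mul_I_im β
    · rintro _ ⟨x, rfl⟩
      simpa [psiEinv_im] using
        psiEinv_im_le hβπ (z := x + β * Complex.I) (by simp [abs_of_pos hβ0])
end
end

section
/- Let c, ω > 0, set n* = c²ω², and let n ≥ n*. Then the function φ(β) = πω tan(β/2) − √n πβ/(2c), defined for 0 ≤ β < π, has a local minimum at β* = 2 arccos((n*/n)^{1/4}), at which it takes the value φ(β*) = −πω H(√(n/n*)), where H(t) = t arccos(1/√t) − √(t−1) for t ≥ 1; moreover β* ≥ π(1 − (n*/n)^{1/4}). -/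
noncomputable section

open Complex Real Set Filter

/-!
Write `s = √(n / n*) ≥ 1` and `u = arccos (1 / √s)`, so that `sec² u = s` and `√n / (2c) = ω s / 2`.
Then `φ(β) = πω (tan (β/2) - (β/2) sec² u)`, a convex function on `[0, π)` whose derivative vanishes
at `β = 2u`; hence `β* = 2u` is its minimum, and `tan u = √(s - 1)` gives the value. The lower
bound on `β*` is Jordan's inequality `sin x ≥ 2x/π` at `x = arcsin (1 / √s)`.
-/

theorem ConvexOn.isMinOn_of_hasDerivWithinAt_eq_zero {S : Set ℝ} {f : ℝ → ℝ} {x : ℝ}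
    (hf : ConvexOn ℝ S f) (hx : x ∈ S) (hf' : HasDerivWithinAt f 0 S x) : IsMinOn f S x := by
  intro y hy
  rcases lt_trichotomy x y with hxy | hxy | hyx
  · have := hf.le_slope_of_hasDerivWithinAt hx hy hxy hf'
    rw [slope_def_field, le_div_iff₀ (sub_pos.2 hxy)] at this
    simpa using this
  · exact (congrArg f hxy).le
  · have := hf.slope_le_of_hasDerivWithinAt hy hx hyx hf'
    rw [slope_def_field, div_le_iff₀ (sub_pos.2 hyx)] at this
    simpa using this

namespace Real

theorem convexOn_tan : ConvexOn ℝ (Ico 0 (π / 2)) tan := by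
  have hcos : ∀ x ∈ Ico 0 (π / 2), cos x ≠ 0 := fun x hx =>
    (cos_pos_of_mem_Ioo ⟨by linarith [hx.1, pi_pos], hx.2⟩).ne'
  refine MonotoneOn.convexOn_of_deriv (convex_Ico _ _)
    (continuousOn_tan.mono hcos) (fun x hx => ?_) ?_
  · exact (differentiableAt_tan.2 (hcos x (interior_subset hx))).differentiableWithinAt
  · rw [interior_Ico]
    intro x hx y hy hxy
    simp only [deriv_tan]
    have hy0 : 0 < cos y := cos_pos_of_mem_Ioo ⟨by linarith [hy.1, pi_pos], hy.2⟩
    have hyx : cos y ≤ cos x :=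
      cos_le_cos_of_nonneg_of_le_pi hx.1.le (by linarith [hy.2, pi_pos]) hxy
    gcongr

theorem isMinOn_tan_sub_div_cos_sq {u : ℝ} (hu : u ∈ Ico 0 (π / 2)) :
    IsMinOn (fun x => tan x - x / cos u ^ 2) (Ico 0 (π / 2)) u := by
  have hcos : cos u ≠ 0 := (cos_pos_of_mem_Ioo ⟨by linarith [hu.1, pi_pos], hu.2⟩).ne'
  refine ConvexOn.isMinOn_of_hasDerivWithinAt_eq_zero ?_ hu ?_
  · have hlin : ConcaveOn ℝ (Ico 0 (π / 2)) (fun x => x / cos u ^ 2) := by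
      refine ((LinearMap.mulRight ℝ (cos u ^ 2)⁻¹).concaveOn (convex_Ico _ _)).congr ?_
      intro x _
      simp [div_eq_mul_inv]
    exact convexOn_tan.sub hlin
  · have := (hasDerivAt_tan hcos).sub ((hasDerivAt_id u).div_const (cos u ^ 2))
    rw [sub_self] at this
    exact this.hasDerivWithinAt

theorem arcsin_le_pi_div_two_mul {x : ℝ} (hx₀ : 0 ≤ x) (hx₁ : x ≤ 1) : arcsin x ≤ π / 2 * x := by
  have h := mul_le_sin (arcsin_nonneg.2 hx₀) (arcsin_le_pi_div_two x)
  rw [sin_arcsin (by linarith) hx₁] at h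
  rw [div_mul_eq_mul_div, div_le_iff₀ pi_pos] at h
  linarith

theorem pi_mul_one_sub_le_two_mul_arccos {x : ℝ} (hx₀ : 0 ≤ x) (hx₁ : x ≤ 1) :
    π * (1 - x) ≤ 2 * arccos x := by
  rw [arccos_eq_pi_div_two_sub_arcsin]
  linarith [arcsin_le_pi_div_two_mul hx₀ hx₁]

theorem inv_rpow_one_div_four {x : ℝ} (hx : 0 ≤ x) : x⁻¹ ^ (1 / 4 : ℝ) = 1 / √(√x) := by
  rw [inv_rpow hx, sqrt_eq_rpow, sqrt_eq_rpow, ← rpow_mul hx, one_div]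
  norm_num

theorem tan_arccos_one_div_sqrt {s : ℝ} (hs : 1 ≤ s) : tan (arccos (1 / √s)) = √(s - 1) := by
  have hs0 : 0 < s := by linarith
  have h1s : 0 ≤ 1 - 1 / s := by rw [sub_nonneg, div_le_one hs0]; exact hs
  rw [tan_arccos, div_pow, one_pow, sq_sqrt hs0.le, div_div_eq_mul_div, div_one, ← sqrt_mul h1s]
  congr 1
  field_simp

theorem cos_arccos_one_div_sqrt_sq {s : ℝ} (hs : 1 ≤ s) : cos (arccos (1 / √s)) ^ 2 = 1 / s := by
  have hs0 : 0 < s := by linarith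
  have h0 : 0 ≤ 1 / √s := by positivity
  have h1 : 1 / √s ≤ 1 := (div_le_one (sqrt_pos.2 hs0)).2 (one_le_sqrt.2 hs)
  rw [cos_arccos (by linarith) h1, div_pow, one_pow, sq_sqrt hs0.le]

end Real

/-- the local minimum of `β ↦ πω tan(β/2) − √n πβ/(2c)` on `[0,π)`. -/
theorem phi_local_min
    (c ω n : ℝ) (hc : 0 < c) (hω : 0 < ω) (hn : c ^ 2 * ω ^ 2 ≤ n) :
    IsLocalMinOn (fun β => π * ω * Real.tan (β / 2) - Real.sqrt n * π * β / (2 * c))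
        (Ico (0 : ℝ) π) (2 * Real.arccos ((c ^ 2 * ω ^ 2 / n) ^ ((1 : ℝ) / 4))) ∧
      π * ω * Real.tan (2 * Real.arccos ((c ^ 2 * ω ^ 2 / n) ^ ((1 : ℝ) / 4)) / 2) -
          Real.sqrt n * π * (2 * Real.arccos ((c ^ 2 * ω ^ 2 / n) ^ ((1 : ℝ) / 4))) / (2 * c) =
        -(π * ω) * (Real.sqrt (n / (c ^ 2 * ω ^ 2)) *
            Real.arccos (1 / Real.sqrt (Real.sqrt (n / (c ^ 2 * ω ^ 2)))) -
          Real.sqrt (Real.sqrt (n / (c ^ 2 * ω ^ 2)) - 1)) ∧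
      π * (1 - (c ^ 2 * ω ^ 2 / n) ^ ((1 : ℝ) / 4)) ≤
        2 * Real.arccos ((c ^ 2 * ω ^ 2 / n) ^ ((1 : ℝ) / 4)) := by
  have hm : 0 < c ^ 2 * ω ^ 2 := by positivity
  have hn0 : 0 < n := hm.trans_le hn
  set s := √(n / (c ^ 2 * ω ^ 2)) with hs_def
  have hs : 1 ≤ s := one_le_sqrt.2 ((one_le_div hm).2 hn)
  have hsqrt_n : √n = c * ω * s := by
    rw [hs_def, sqrt_div' _ hm.le, sqrt_mul' _ (sq_nonneg _), sqrt_sq hc.le, sqrt_sq hω.le]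
    field_simp
  have hA : (c ^ 2 * ω ^ 2 / n) ^ (1 / 4 : ℝ) = 1 / √s := by
    rw [← inv_div]; exact Real.inv_rpow_one_div_four (by positivity)
  rw [hA]
  set u := arccos (1 / √s)
  have hu : u ∈ Ico 0 (π / 2) := ⟨arccos_nonneg _, arccos_lt_pi_div_two.2 (by positivity)⟩
  have hφ : ∀ β, π * ω * Real.tan (β / 2) - √n * π * β / (2 * c) =
      π * ω * (Real.tan (β / 2) - β / 2 / Real.cos u ^ 2) := by
    intro β
    rw [Real.cos_arccos_one_div_sqrt_sq hs, hsqrt_n]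
    field_simp
  refine ⟨IsMinOn.localize fun β hβ => ?_, ?_, Real.pi_mul_one_sub_le_two_mul_arccos (by positivity)
    ((div_le_one (by positivity)).2 (one_le_sqrt.2 hs))⟩
  · have hβ : β / 2 ∈ Ico 0 (π / 2) := ⟨by linarith [hβ.1], by linarith [hβ.2]⟩
    have key := Real.isMinOn_tan_sub_div_cos_sq hu hβ
    change (_ : ℝ) ≤ _ at key ⊢
    rw [hφ, hφ, mul_div_cancel_left₀ u two_ne_zero]
    exact mul_le_mul_of_nonneg_left key (by positivity)
  · rw [hφ, mul_div_cancel_left₀ u two_ne_zero, Real.tan_arccos_one_div_sqrt hs,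
      Real.cos_arccos_one_div_sqrt_sq hs]
    field_simp
    ring
end
end
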